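/- Assume all agents have additive cost functions, n ≥ 3 and 1 < α < 3/2. Every α-PMMS allocation is (nα/(α + (n−1)(1−α/2)))-MMS. Moreover, for every even n ≥ 4 and every ε > 0, there exists an n-agent instance with additive cost functions and an α-PMMS allocation that is not (nα/(α + (n−1)(2−α)) − ε)-MMS. -/

import Mathlib

open Finset

/-- `T` is a `k`-partition of the bundle `S`: pairwise disjoint bundles whose union is `S`. -/
def IsPartitionOf {E : Type*} [DecidableEq E] {k : ℕ} (T : Fin k → Finset E) (S : Finset E) :
    Prop :=
  (∀ i j : Fin k, i ≠ j → Disjoint (T i) (T j)) ∧ Finset.univ.biUnion T = S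

/-- The maximin share of cost function `c` on `S` among `k` agents:
the minimum over `k`-partitions of `S` of the maximum cost of a bundle. -/
noncomputable def MMS {E : Type*} [DecidableEq E] (c : Finset E → ℝ) (k : ℕ) (S : Finset E) :
    ℝ :=
  sInf { m : ℝ | ∃ T : Fin k → Finset E, IsPartitionOf T S ∧ m = ⨆ j : Fin k, c (T j) }

/-- `c` is a nonnegative additive cost function. -/
def AdditiveCost {E : Type*} [DecidableEq E] (c : Finset E → ℝ) : Prop :=
  (∀ S : Finset E, 0 ≤ c S) ∧ ∀ S : Finset E, c S = ∑ e ∈ S, c {e}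

/-- `c` is a nonnegative monotone cost function with `c ∅ = 0`. -/
def MonotoneCost {E : Type*} (c : Finset E → ℝ) : Prop :=
  (∀ S : Finset E, 0 ≤ c S) ∧ c ∅ = 0 ∧ ∀ ⦃S T : Finset E⦄, S ⊆ T → c S ≤ c T

/-- `c` is subadditive. -/
def SubadditiveCost {E : Type*} [DecidableEq E] (c : Finset E → ℝ) : Prop :=
  ∀ S T : Finset E, c (S ∪ T) ≤ c S + c T

/-- `c` is submodular. -/
def SubmodularCost {E : Type*} [DecidableEq E] (c : Finset E → ℝ) : Prop :=
  ∀ S T : Finset E, c (S ∪ T) + c (S ∩ T) ≤ c S + c T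

/-- `A` is an allocation of all chores among the `n` agents. -/
def IsAllocation {E : Type*} [DecidableEq E] [Fintype E] {n : ℕ} (A : Fin n → Finset E) : Prop :=
  IsPartitionOf A Finset.univ

/-- `A` is `α`-envy-free. -/
def IsEF {E : Type*} {n : ℕ} (α : ℝ) (c : Fin n → Finset E → ℝ) (A : Fin n → Finset E) : Prop :=
  ∀ i j, c i (A i) ≤ α * c i (A j)

/-- `A` is `α`-envy-free up to one item. -/
def IsEF1 {E : Type*} [DecidableEq E] {n : ℕ} (α : ℝ) (c : Fin n → Finset E → ℝ)
    (A : Fin n → Finset E) : Prop :=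
  ∀ i j, i ≠ j → A i = ∅ ∨ ∃ e ∈ A i, c i (A i \ {e}) ≤ α * c i (A j)

/-- `A` is `α`-envy-free up to any (positive-cost) item. -/
def IsEFX {E : Type*} [DecidableEq E] {n : ℕ} (α : ℝ) (c : Fin n → Finset E → ℝ)
    (A : Fin n → Finset E) : Prop :=
  ∀ i j, i ≠ j → ∀ e ∈ A i, 0 < c i {e} → c i (A i \ {e}) ≤ α * c i (A j)

/-- `A` is an `α`-MMS allocation. -/
def IsMMSFair {E : Type*} [DecidableEq E] [Fintype E] {n : ℕ} (α : ℝ)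
    (c : Fin n → Finset E → ℝ) (A : Fin n → Finset E) : Prop :=
  ∀ i, c i (A i) ≤ α * MMS (c i) n Finset.univ

/-- `A` is an `α`-PMMS allocation. -/
def IsPMMS {E : Type*} [DecidableEq E] {n : ℕ} (α : ℝ)
    (c : Fin n → Finset E → ℝ) (A : Fin n → Finset E) : Prop :=
  ∀ i j, i ≠ j → c i (A i) ≤ α * MMS (c i) 2 (A i ∪ A j)

/-- The optimal (minimum) social cost over all allocations. -/
noncomputable def OPT {E : Type*} [DecidableEq E] [Fintype E] {n : ℕ}
    (c : Fin n → Finset E → ℝ) : ℝ :=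
  sInf { s : ℝ | ∃ A : Fin n → Finset E, IsAllocation A ∧ s = ∑ i, c i (A i) }

/-! Fix an agent, let `x` be the cost of her bundle and `q = x / α`. If some chore costs her at
least `q`, her maximin share is at least `q` already. Otherwise `α`-PMMS with `α < 3/2` forces
every other bundle to cost her at least `q - x / 2`, so the total cost, which is at most `n` times
her maximin share, is at least `x + (n - 1) (q - x / 2)`. -/

section MaximinShare

variable {E : Type*} [DecidableEq E]

theorem isPartitionOf_fibers {k : ℕ} (f : E → Fin k) (S : Finset E) :
    IsPartitionOf (fun j => S.filter (f · = j)) S := by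
  refine ⟨fun i j hij => disjoint_filter.2 fun e _ hi hj => hij (hi ▸ hj), ?_⟩
  ext e
  simp

theorem MMS_le_iSup {c : Finset E → ℝ} (hc : ∀ S, 0 ≤ c S) {k : ℕ} (hk : 0 < k)
    {T : Fin k → Finset E} {S : Finset E} (hT : IsPartitionOf T S) :
    MMS c k S ≤ ⨆ j, c (T j) := by
  refine csInf_le ⟨0, ?_⟩ ⟨T, hT, rfl⟩
  rintro m ⟨T', -, rfl⟩
  exact (hc _).trans (le_ciSup (f := fun j => c (T' j)) (Set.finite_range _).bddAbove ⟨0, hk⟩)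

theorem le_MMS {c : Finset E → ℝ} {k : ℕ} (hk : 0 < k) {S : Finset E} {L : ℝ}
    (h : ∀ T : Fin k → Finset E, IsPartitionOf T S → L ≤ ⨆ j, c (T j)) :
    L ≤ MMS c k S := by
  refine le_csInf ⟨_, _, isPartitionOf_fibers (fun _ => ⟨0, hk⟩) S, rfl⟩ ?_
  rintro m ⟨T, hT, rfl⟩
  exact h T hT

theorem MMS_nonneg {c : Finset E → ℝ} (hc : ∀ S, 0 ≤ c S) {k : ℕ} (hk : 0 < k)
    (S : Finset E) : 0 ≤ MMS c k S :=
  le_MMS hk fun T _ =>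
    (hc _).trans (le_ciSup (f := fun j => c (T j)) (Set.finite_range _).bddAbove ⟨0, hk⟩)

end MaximinShare

namespace AdditiveCost

variable {E : Type*} [DecidableEq E] {c : Finset E → ℝ}

theorem map_union (hc : AdditiveCost c) {S T : Finset E} (h : Disjoint S T) :
    c (S ∪ T) = c S + c T := by
  rw [hc.2, sum_union h, ← hc.2, ← hc.2]

theorem map_insert (hc : AdditiveCost c) {e : E} {S : Finset E} (he : e ∉ S) :
    c (insert e S) = c S + c {e} := by
  rw [insert_eq, union_comm, hc.map_union (disjoint_singleton_right.2 he)]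

theorem map_sdiff (hc : AdditiveCost c) {S T : Finset E} (h : T ⊆ S) :
    c (S \ T) = c S - c T := by
  rw [eq_sub_iff_add_eq, ← hc.map_union sdiff_disjoint, sdiff_union_of_subset h]

theorem mono (hc : AdditiveCost c) {S T : Finset E} (h : S ⊆ T) : c S ≤ c T := by
  rw [← sdiff_union_of_subset h, hc.map_union sdiff_disjoint]
  linarith [hc.1 (T \ S)]

theorem sum_eq_of_isPartitionOf (hc : AdditiveCost c) {k : ℕ} {T : Fin k → Finset E}
    {S : Finset E} (hT : IsPartitionOf T S) : ∑ j, c (T j) = c S := by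
  rw [← hT.2, hc.2, sum_biUnion fun i _ j _ hij => hT.1 i j hij]
  exact sum_congr rfl fun j _ => hc.2 (T j)

/-- A discrete intermediate value theorem: adding the chores of `S` one at a time moves the cost
from `0` to `c S` in steps shorter than `b - a`, so it cannot jump over `(a, b)`. -/
theorem exists_subset_mem_Ioo (hc : AdditiveCost c) {S : Finset E} {a b : ℝ} (ha : 0 ≤ a)
    (hS : a < c S) (hsmall : ∀ e ∈ S, c {e} < b - a) : ∃ T ⊆ S, a < c T ∧ c T < b := by
  induction S using Finset.induction_on with
  | empty => rw [hc.2, sum_empty] at hS; linarith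
  | @insert e S he ih =>
    by_cases hlow : a < c S
    · obtain ⟨T, hTS, hT⟩ := ih hlow fun e' he' => hsmall e' (mem_insert_of_mem he')
      exact ⟨T, hTS.trans (subset_insert e S), hT⟩
    · refine ⟨insert e S, subset_rfl, hS, ?_⟩
      rw [hc.map_insert he]
      linarith [hsmall e (mem_insert_self e S)]

theorem le_mul_MMS (hc : AdditiveCost c) {k : ℕ} (hk : 0 < k) (S : Finset E) :
    c S ≤ k * MMS c k S := by
  rw [← div_le_iff₀' (by positivity)]
  refine le_MMS hk fun T hT => ?_
  rw [div_le_iff₀' (by positivity), ← hc.sum_eq_of_isPartitionOf hT]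
  calc ∑ j, c (T j) ≤ ∑ _j : Fin k, ⨆ l, c (T l) :=
        sum_le_sum fun j _ => le_ciSup (f := fun l => c (T l)) (Set.finite_range _).bddAbove j
    _ = k * ⨆ l, c (T l) := by simp

theorem singleton_le_MMS (hc : AdditiveCost c) {k : ℕ} (hk : 0 < k) {S : Finset E} {e : E}
    (he : e ∈ S) : c {e} ≤ MMS c k S := by
  refine le_MMS hk fun T hT => ?_
  obtain ⟨j, -, hj⟩ := mem_biUnion.1 (hT.2 ▸ he)
  exact (hc.mono (singleton_subset_iff.2 hj)).trans
    (le_ciSup (f := fun l => c (T l)) (Set.finite_range _).bddAbove j)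

theorem le_or_le_sdiff_of_le_MMS_two (hc : AdditiveCost c) {S T : Finset E} {q : ℝ}
    (hq : q ≤ MMS c 2 S) (hT : T ⊆ S) : q ≤ c T ∨ q ≤ c (S \ T) := by
  by_contra! h
  have hpart : IsPartitionOf ![T, S \ T] S := by
    refine ⟨?_, by simp [Fin.univ_succ, union_sdiff_of_subset hT]⟩
    intro i j hij
    fin_cases i <;> fin_cases j <;> simp_all [disjoint_sdiff, sdiff_disjoint]
  have hsup : ⨆ j, c (![T, S \ T] j) < q := by
    refine lt_of_le_of_lt (ciSup_le fun j => ?_) (max_lt h.1 h.2)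
    fin_cases j
    exacts [le_max_left _ _, le_max_right _ _]
  exact (hq.trans (MMS_le_iSup hc.1 two_pos hpart)).not_gt hsup

/-- If `A ∪ B` cannot be split into two bundles both cheaper than `q`, then no subset of `A ∪ B`
has cost in the gap `(c A + c B - q, q)`. When `B` is cheap its chores are too small to jump over
this gap, which pushes the gap down to `(c A - q, q)` for subsets of `A`; as the chores of `A` are
then smaller than that gap, some subset of `A` lands in it. -/
theorem sub_half_le_of_le_MMS_two (hc : AdditiveCost c) {A B : Finset E} (hAB : Disjoint A B)
    {q : ℝ} (hqA : q ≤ c A) (hA : 2 * c A < 3 * q) (hsmall : ∀ e ∈ A, c {e} < q)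
    (hq : q ≤ MMS c 2 (A ∪ B)) : q - c A / 2 ≤ c B := by
  by_contra! hB
  have gap : ∀ T ⊆ A ∪ B, q ≤ c T ∨ c T ≤ c A + c B - q := fun T hT =>
    (hc.le_or_le_sdiff_of_le_MMS_two hq hT).imp_right fun h => by
      rw [hc.map_sdiff hT, hc.map_union hAB] at h
      linarith
  have below : ∀ T ⊆ A, c T ≤ c A + c B - q → c T ≤ c A - q := by
    intro T hTA hT
    by_contra! hT'
    obtain ⟨U, hUB, hU⟩ := hc.exists_subset_mem_Ioo (S := B) (a := c A + c B - q - c T)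
      (b := q - c T) (by linarith) (by linarith)
      fun e he => by linarith [hc.mono (singleton_subset_iff.2 he)]
    have hTU := hc.map_union (hAB.mono hTA hUB)
    rcases gap (T ∪ U) (union_subset_union hTA hUB) with h | h <;> linarith
  obtain ⟨T, hTA, hT⟩ := hc.exists_subset_mem_Ioo (S := A) (a := c A - q) (b := q)
    (by linarith) (by linarith) fun e he => by
      have heA : {e} ⊆ A := singleton_subset_iff.2 he
      rcases gap {e} (heA.trans subset_union_left) with h | h
      · linarith [hsmall e he]
      · linarith [below {e} heA h]
  rcases gap T (hTA.trans subset_union_left) with h | h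
  · linarith
  · linarith [below T hTA h]

variable [Fintype E]

theorem cost_mul_le_of_pairwise_le_MMS_two (hc : AdditiveCost c) {n : ℕ} (hn : 2 ≤ n)
    {A : Fin n → Finset E} (hA : IsAllocation A) {α : ℝ} (hα1 : 1 ≤ α) (hα2 : α < 3 / 2)
    {i : Fin n} (hP : ∀ j ≠ i, c (A i) ≤ α * MMS c 2 (A i ∪ A j)) :
    c (A i) * (α + (n - 1) * (1 - α / 2)) ≤ n * α * MMS c n univ := by
  have hn0 : 0 < n := by omega
  have hn2 : (2 : ℝ) ≤ n := by exact_mod_cast hn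
  set x := c (A i)
  set μ := MMS c n univ
  have hμ : 0 ≤ μ := MMS_nonneg hc.1 hn0 univ
  have hD : α + (n - 1) * (1 - α / 2) ≤ n := by nlinarith
  rcases (hc.1 (A i) : 0 ≤ x).eq_or_lt with hx | hx
  · rw [show x = 0 from hx.symm, zero_mul]
    positivity
  set q := x / α
  have hxq : x = α * q := (mul_div_cancel₀ x (by positivity)).symm
  by_cases hbig : ∃ e, q ≤ c {e}
  · obtain ⟨e, he⟩ := hbig
    have hqμ : q ≤ μ := he.trans (hc.singleton_le_MMS hn0 (mem_univ e))
    calc x * (α + (n - 1) * (1 - α / 2)) ≤ α * μ * n := by gcongr <;> nlinarith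
      _ = n * α * μ := by ring
  push Not at hbig
  have hothers : ∀ j ∈ univ.erase i, q - x / 2 ≤ c (A j) := fun j hj => by
    have hji := ne_of_mem_erase hj
    refine hc.sub_half_le_of_le_MMS_two (hA.1 i j hji.symm) (by nlinarith) (by nlinarith)
      (fun e _ => hbig e) ?_
    rw [div_le_iff₀' (by linarith)]
    exact hP j hji
  have hsum : x + (n - 1) * (q - x / 2) ≤ n * μ := calc
    x + (n - 1) * (q - x / 2) ≤ x + ∑ j ∈ univ.erase i, c (A j) := by
      have := card_nsmul_le_sum _ _ _ hothers
      rw [card_erase_of_mem (mem_univ i), card_univ, Fintype.card_fin, nsmul_eq_mul,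
        Nat.cast_sub (by omega), Nat.cast_one] at this
      linarith
    _ = c univ := by rw [add_sum_erase _ (fun j => c (A j)) (mem_univ i),
      hc.sum_eq_of_isPartitionOf hA]
    _ ≤ n * μ := hc.le_mul_MMS hn0 univ
  nlinarith

end AdditiveCost

theorem isMMSFair_of_isPMMS {E : Type*} [DecidableEq E] [Fintype E] {n : ℕ} (hn : 2 ≤ n)
    {α : ℝ} (hα1 : 1 ≤ α) (hα2 : α < 3 / 2) {c : Fin n → Finset E → ℝ}
    (hc : ∀ i, AdditiveCost (c i)) {A : Fin n → Finset E} (hA : IsAllocation A)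
    (hP : IsPMMS α c A) : IsMMSFair (n * α / (α + (n - 1) * (1 - α / 2))) c A := fun i => by
  have hn2 : (2 : ℝ) ≤ n := by exact_mod_cast hn
  rw [div_mul_eq_mul_div, le_div_iff₀ (by nlinarith)]
  exact (hc i).cost_mul_le_of_pairwise_le_MMS_two hn hA hα1 hα2 fun j hj => hP i j hj.symm

theorem additiveCost_sum {E : Type*} [DecidableEq E] {w : E → ℝ} (hw : ∀ e, 0 ≤ w e) :
    AdditiveCost fun S => ∑ e ∈ S, w e :=
  ⟨fun _ => sum_nonneg fun e _ => hw e, fun S => by simp⟩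

theorem additiveCost_zero {E : Type*} [DecidableEq E] : AdditiveCost fun _ : Finset E => (0 : ℝ) :=
  ⟨fun _ => le_rfl, fun S => by simp⟩

section GridInstance

/-! Chore `e : Fin (n * n)` is the cell `finProdFinEquiv.symm e = (row, column)` of an `n × n`
grid. Agent `0` pays `α / n` for a cell in column `0` and `(2 - α) / n` for any other cell; the
other agents pay nothing. Giving column `j` to agent `j` is `α`-PMMS, while the rows split the
chores into `n` bundles that agent `0` values equally. -/

variable (n : ℕ)

def gridColumn (j : Fin n) : Finset (Fin (n * n)) :=
  univ.filter fun e => (finProdFinEquiv.symm e).2 = j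

def gridRow (s : Fin n) : Finset (Fin (n * n)) :=
  univ.filter fun e => (finProdFinEquiv.symm e).1 = s

theorem isAllocation_gridColumn : IsAllocation (gridColumn n) :=
  isPartitionOf_fibers _ univ

theorem isPartitionOf_gridRow : IsPartitionOf (gridRow n) univ :=
  isPartitionOf_fibers _ univ

variable [NeZero n] (α : ℝ)

def columnWeight (j : Fin n) : ℝ :=
  if j = 0 then α else 2 - α

noncomputable def gridCost (i : Fin n) : Finset (Fin (n * n)) → ℝ :=
  if i = 0 then fun S => ∑ e ∈ S, columnWeight n α (finProdFinEquiv.symm e).2 / n else fun _ => 0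

variable {α}

theorem additiveCost_gridCost (hα0 : 0 ≤ α) (hα2 : α ≤ 2) (i : Fin n) :
    AdditiveCost (gridCost n α i) := by
  unfold gridCost
  split_ifs
  · refine additiveCost_sum fun e => div_nonneg ?_ n.cast_nonneg
    unfold columnWeight
    split_ifs <;> linarith
  · exact additiveCost_zero

theorem gridCost_zero_gridColumn (j : Fin n) :
    gridCost n α 0 (gridColumn n j) = columnWeight n α j := by
  rw [gridCost, if_pos rfl, gridColumn, sum_filter, ← Equiv.sum_comp finProdFinEquiv]
  simp [Fintype.sum_prod_type, mul_div_cancel₀ _ (NeZero.ne (n : ℝ))]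

theorem sum_columnWeight : ∑ j, columnWeight n α j = α + (n - 1) * (2 - α) := by
  simp only [columnWeight]
  rw [← add_sum_erase _ _ (mem_univ 0), if_pos rfl,
    sum_congr rfl fun j hj => if_neg (ne_of_mem_erase hj)]
  simp [card_erase_of_mem, Nat.cast_sub NeZero.one_le, mul_sub]

theorem gridCost_zero_gridRow (s : Fin n) :
    gridCost n α 0 (gridRow n s) = (α + (n - 1) * (2 - α)) / n := by
  rw [gridCost, if_pos rfl, gridRow, sum_filter, ← Equiv.sum_comp finProdFinEquiv]
  simp only [Equiv.symm_apply_apply, Fintype.sum_prod_type, sum_ite_irrel, sum_const_zero,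
    sum_ite_eq', mem_univ, if_true]
  rw [← sum_div, sum_columnWeight]

theorem isPMMS_gridColumn (hα0 : 0 ≤ α) (hα2 : α ≤ 2) :
    IsPMMS α (gridCost n α) (gridColumn n) := by
  intro i j hij
  by_cases hi : i = 0
  · subst hi
    have hc := additiveCost_gridCost n hα0 hα2 0
    have hhalf := hc.le_mul_MMS two_pos (gridColumn n 0 ∪ gridColumn n j)
    rw [hc.map_union ((isAllocation_gridColumn n).1 0 j hij), gridCost_zero_gridColumn,
      gridCost_zero_gridColumn, columnWeight, columnWeight, if_pos rfl, if_neg hij.symm,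
      Nat.cast_ofNat] at hhalf
    rw [gridCost_zero_gridColumn, columnWeight, if_pos rfl]
    nlinarith
  · simp only [gridCost, if_neg hi]
    exact mul_nonneg hα0 (MMS_nonneg (fun _ => le_rfl) two_pos _)

theorem MMS_gridCost_zero_le (hα0 : 0 ≤ α) (hα2 : α ≤ 2) :
    MMS (gridCost n α 0) n univ ≤ (α + (n - 1) * (2 - α)) / n := by
  have h := MMS_le_iSup (additiveCost_gridCost n hα0 hα2 0).1 (NeZero.pos n)
    (isPartitionOf_gridRow n)
  simpa only [gridCost_zero_gridRow, ciSup_const] using h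

end GridInstance

theorem exists_isPMMS_not_isMMSFair (n : ℕ) [NeZero n] {α ε : ℝ} (hα0 : 0 < α) (hα2 : α ≤ 2)
    (hε : 0 < ε) :
    ∃ (m : ℕ) (c : Fin n → Finset (Fin m) → ℝ) (A : Fin n → Finset (Fin m)),
      (∀ i, AdditiveCost (c i)) ∧ IsAllocation A ∧ IsPMMS α c A ∧
      ¬ IsMMSFair ((n : ℝ) * α / (α + ((n : ℝ) - 1) * (2 - α)) - ε) c A := by
  refine ⟨n * n, gridCost n α, gridColumn n, additiveCost_gridCost n hα0.le hα2,
    isAllocation_gridColumn n, isPMMS_gridColumn n hα0.le hα2, fun hfair => ?_⟩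
  have h0 := hfair 0
  rw [gridCost_zero_gridColumn, columnWeight, if_pos rfl] at h0
  set D := α + ((n : ℝ) - 1) * (2 - α)
  have hn : (1 : ℝ) ≤ n := by exact_mod_cast NeZero.one_le
  have hD : 0 < D := by nlinarith
  have hμ := MMS_gridCost_zero_le n hα0.le hα2
  have hμ0 := MMS_nonneg (additiveCost_gridCost n hα0.le hα2 0).1 (NeZero.pos n) univ
  have hβ : (n : ℝ) * α / D * (D / n) = α := by field_simp
  rcases le_or_gt ((n : ℝ) * α / D - ε) 0 with hneg | hpos
  · nlinarith [mul_nonpos_of_nonpos_of_nonneg hneg hμ0]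
  · nlinarith [mul_le_mul_of_nonneg_left hμ hpos.le, mul_pos hε (div_pos hD (by positivity))]

/-- Proposition 5.6: with additive cost functions, `n ≥ 3` and `1 < α < 3/2`, every
`α`-PMMS allocation is `nα/(α+(n-1)(1-α/2))`-MMS; and for even `n ≥ 4` and every `ε > 0`
there is an `α`-PMMS allocation that is not `(nα/(α+(n-1)(2-α)) - ε)`-MMS. -/
theorem alphaPMMS_MMS_bounds :
    (∀ (E : Type) [DecidableEq E] [Fintype E] (n : ℕ), 3 ≤ n →
      ∀ α : ℝ, 1 < α → α < 3 / 2 →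
      ∀ c : Fin n → Finset E → ℝ, (∀ i, AdditiveCost (c i)) →
      ∀ A : Fin n → Finset E, IsAllocation A → IsPMMS α c A →
        IsMMSFair ((n : ℝ) * α / (α + ((n : ℝ) - 1) * (1 - α / 2))) c A) ∧
    (∀ n : ℕ, Even n → 4 ≤ n → ∀ α : ℝ, 1 < α → α < 3 / 2 → ∀ ε : ℝ, 0 < ε →
      ∃ (m : ℕ) (c : Fin n → Finset (Fin m) → ℝ) (A : Fin n → Finset (Fin m)),
        (∀ i, AdditiveCost (c i)) ∧ IsAllocation A ∧ IsPMMS α c A ∧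
        ¬ IsMMSFair ((n : ℝ) * α / (α + ((n : ℝ) - 1) * (2 - α)) - ε) c A) := by
  refine ⟨fun E _ _ n hn α hα1 hα2 c hc A hA hP => ?_, fun n _ hn α hα1 hα2 ε hε => ?_⟩
  · exact isMMSFair_of_isPMMS (by omega) hα1.le hα2 hc hA hP
  · have : NeZero n := ⟨by omega⟩
    exact exists_isPMMS_not_isMMSFair n (by linarith) (by linarith) hε
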